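/- arXiv:2312.10176 — 4 statements merged into one kernel-verified Lean document; each statement's English description precedes it below -/
import Mathlib

section
/- Let d ≥ 1 and let Δᵖ, Δ^q ∈ ℝ^d have all coordinates positive. Set Ψᵖ = {z ⊘ Δᵖ : z ∈ ℤ^d} and Ψ^q = {z ⊘ Δ^q : z ∈ ℤ^d}. Suppose aᵖ, a^q ∈ ℤ^d satisfy: for each coordinate j, if Δᵖ_j/Δ^q_j ∈ ℚ then aᵖ_j and a^q_j are coprime positive integers with aᵖ_j/a^q_j = Δᵖ_j/Δ^q_j, while if Δᵖ_j/Δ^q_j ∉ ℚ then aᵖ_j = 0. Then Ψᵖ ∩ Ψ^q = {aᵖ ∘ z ⊘ Δᵖ : z ∈ ℤ^d}. In particular, if Δᵖ_j/Δ^q_j is irrational for every j, then Ψᵖ ∩ Ψ^q = {0}. -/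
open scoped BigOperators

/-- Lemma on the intersection of two aliasing lattices `Ψᵖ = {z ⊘ Δᵖ : z ∈ ℤ^d}` and
`Ψ^q = {z ⊘ Δ^q : z ∈ ℤ^d}` (Lemma on grid aliasing). -/
theorem alias_grid_intersection
    (d : ℕ) (hd : 1 ≤ d) (Δp Δq : Fin d → ℝ)
    (hΔp : ∀ j, 0 < Δp j) (hΔq : ∀ j, 0 < Δq j)
    (ap aq : Fin d → ℤ)
    (hrat : ∀ j, ¬ Irrational (Δp j / Δq j) →
      0 < ap j ∧ 0 < aq j ∧ IsCoprime (ap j) (aq j) ∧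
        (ap j : ℝ) / (aq j : ℝ) = Δp j / Δq j)
    (hirr : ∀ j, Irrational (Δp j / Δq j) → ap j = 0) :
    ({k : Fin d → ℝ | ∃ z : Fin d → ℤ, ∀ j, k j = (z j : ℝ) / Δp j} ∩
        {k : Fin d → ℝ | ∃ z : Fin d → ℤ, ∀ j, k j = (z j : ℝ) / Δq j} =
      {k : Fin d → ℝ | ∃ z : Fin d → ℤ, ∀ j, k j = (ap j : ℝ) * (z j : ℝ) / Δp j}) ∧
    ((∀ j, Irrational (Δp j / Δq j)) →
      {k : Fin d → ℝ | ∃ z : Fin d → ℤ, ∀ j, k j = (z j : ℝ) / Δp j} ∩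
          {k : Fin d → ℝ | ∃ z : Fin d → ℤ, ∀ j, k j = (z j : ℝ) / Δq j} = {0}) := by
  have hmain :
      {k : Fin d → ℝ | ∃ z : Fin d → ℤ, ∀ j, k j = (z j : ℝ) / Δp j} ∩
        {k : Fin d → ℝ | ∃ z : Fin d → ℤ, ∀ j, k j = (z j : ℝ) / Δq j} =
      {k : Fin d → ℝ | ∃ z : Fin d → ℤ, ∀ j, k j = (ap j : ℝ) * (z j : ℝ) / Δp j} := by
    ext k
    constructor
    · rintro ⟨⟨z1, hz1⟩, ⟨z2, hz2⟩⟩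
      have key : ∀ j, ∃ w : ℤ, k j = (ap j : ℝ) * (w : ℝ) / Δp j := by
        intro j
        have hpj := (hΔp j).ne'
        have hqj := (hΔq j).ne'
        have heq : (z1 j : ℝ) * Δq j = (z2 j : ℝ) * Δp j := by
          have := (hz1 j).symm.trans (hz2 j)
          field_simp at this
          linarith
        by_cases hI : Irrational (Δp j / Δq j)
        · -- k j must be 0
          have hz10 : z1 j = 0 := by
            by_contra h0
            have hz20 : z2 j ≠ 0 := by
              intro h
              rw [h] at heq
              simp at heq
              rcases heq with h | h
              · exact h0 (by exact_mod_cast h)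
              · exact hqj h
            have : Δp j / Δq j = (z1 j : ℝ) / (z2 j : ℝ) := by
              field_simp
              linarith
            have : ¬ Irrational (Δp j / Δq j) := by
              rw [this, show ((z1 j : ℝ) / (z2 j : ℝ)) = ((z1 j / z2 j : ℚ) : ℝ) by
                push_cast; ring]
              exact Rat.not_irrational _
            exact this hI
          refine ⟨0, ?_⟩
          rw [hz1 j, hz10]
          simp
        · obtain ⟨hap, haq, hcop, hratio⟩ := hrat j hI
          -- z1 * aq = z2 * ap
          have hzz : z1 j * aq j = z2 j * ap j := by
            have haqR : (aq j : ℝ) ≠ 0 := Int.cast_ne_zero.mpr haq.ne'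
            have : (z1 j : ℝ) * (aq j : ℝ) = (z2 j : ℝ) * (ap j : ℝ) := by
              have h1 : (ap j : ℝ) * Δq j = (aq j : ℝ) * Δp j := by
                field_simp at hratio
                linarith
              have h2 := heq
              -- z1 * Δq = z2 * Δp and ap * Δq = aq * Δp
              -- z1 * aq * Δq = z2 * Δp * aq = z2 * ap * Δq
              have : (z1 j : ℝ) * (aq j : ℝ) * Δq j = (z2 j : ℝ) * (ap j : ℝ) * Δq j := by
                calc (z1 j : ℝ) * (aq j : ℝ) * Δq j = (z1 j : ℝ) * Δq j * (aq j : ℝ) := by ring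
                _ = (z2 j : ℝ) * Δp j * (aq j : ℝ) := by rw [h2]
                _ = (z2 j : ℝ) * ((aq j : ℝ) * Δp j) := by ring
                _ = (z2 j : ℝ) * ((ap j : ℝ) * Δq j) := by rw [h1]
                _ = (z2 j : ℝ) * (ap j : ℝ) * Δq j := by ring
              exact mul_right_cancel₀ hqj this
            exact_mod_cast this
          have hdvd : ap j ∣ z1 j := by
            have : ap j ∣ z1 j * aq j := ⟨z2 j, by linarith [hzz]⟩
            exact hcop.dvd_of_dvd_mul_right this
          obtain ⟨w, hw⟩ := hdvd
          refine ⟨w, ?_⟩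
          rw [hz1 j, hw]
          push_cast; ring_nf
      choose w hw using key
      exact ⟨w, hw⟩
    · rintro ⟨z, hz⟩
      constructor
      · exact ⟨fun j => ap j * z j, fun j => by rw [hz j]; push_cast; ring⟩
      · have key : ∀ j, ∃ m : ℤ, k j = (m : ℝ) / Δq j := by
          intro j
          by_cases hI : Irrational (Δp j / Δq j)
          · refine ⟨0, ?_⟩
            rw [hz j, hirr j hI]
            simp
          · obtain ⟨hap, haq, hcop, hratio⟩ := hrat j hI
            refine ⟨aq j * z j, ?_⟩
            rw [hz j]
            have hpj := (hΔp j).ne'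
            have hqj := (hΔq j).ne'
            have haqR : (aq j : ℝ) ≠ 0 := Int.cast_ne_zero.mpr haq.ne'
            have h1 : (ap j : ℝ) * Δq j = (aq j : ℝ) * Δp j := by
              field_simp at hratio
              linarith
            push_cast
            field_simp
            linear_combination (z j : ℝ) * h1
        choose m hm using key
        exact ⟨m, hm⟩
  refine ⟨hmain, fun hall => ?_⟩
  rw [hmain]
  ext k
  simp only [Set.mem_setOf_eq, Set.mem_singleton_iff]
  constructor
  · rintro ⟨z, hz⟩
    funext j
    rw [hz j, hirr j (hall j)]
    simp
  · rintro rfl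
    exact ⟨0, fun j => by simp⟩
end

section
/- Let d ≥ 1 and let r ≥ 3 be an integer. For each j ∈ {1, …, r}, let (H_{j,n})_{n∈ℕ} be a sequence of measurable functions ℝ^d → ℂ such that ∫_{ℝ^d} |H_{j,n}(k)|² dk = 1 for all n and ∫_{ℝ^d} |H_{j,n}(k)| dk → 0 as n → ∞. Then for every ψ ∈ ℝ^d, the multilinear integral Ĩ_{r,n}(ψ) = ∫_{ℝ^d} ⋯ ∫_{ℝ^d} |H_{1,n}(k₁) ⋯ H_{r−1,n}(k_{r−1}) · H_{r,n}(ψ − Σ_{j=1}^{r−1} k_j)| dk₁ ⋯ dk_{r−1} converges to 0 as n → ∞. -/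
/-!
Integrate out the last free variable first: for fixed `k₁, …, k_{r-2}` the inner integral
`∫ |H_{r-1}(x)| |H_r(c - x)| dx` is at most `‖H_{r-1}‖₂ ‖H_r‖₂ = 1` by Cauchy–Schwarz, since
`x ↦ c - x` preserves Lebesgue measure. What is left factorises as `∏_{j ≤ r-2} ‖H_j‖₁`, a
product of `r - 2 ≥ 1` null sequences.
-/

open MeasureTheory Filter
open scoped ENNReal BigOperators

theorem lintegral_fin_nat_prod_eq_prod {E : Type*} [MeasurableSpace E] {n : ℕ}
    (μ : Fin n → Measure E) [∀ i, SigmaFinite (μ i)]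
    {f : Fin n → E → ℝ≥0∞} (hf : ∀ i, Measurable (f i)) :
    ∫⁻ x, ∏ i, f i (x i) ∂Measure.pi μ = ∏ i, ∫⁻ x, f i x ∂μ i := by
  induction n with
  | zero => simp [lintegral_const]
  | succ n ih =>
    have hprod : Measurable fun x : Fin (n + 1) → E => ∏ i, f i (x i) :=
      Finset.measurable_prod _ fun i _ => (hf i).comp (measurable_pi_apply i)
    have htail : Measurable fun y : Fin n → E => ∏ i : Fin n, f i.succ (y i) :=
      Finset.measurable_prod _ fun i _ => (hf i.succ).comp (measurable_pi_apply i)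
    rw [← (measurePreserving_piFinSuccAbove μ 0).symm.lintegral_comp hprod]
    simp only [MeasurableEquiv.piFinSuccAbove_symm_apply, Fin.insertNthEquiv_zero,
      Fin.consEquiv_apply, Fin.prod_univ_succ, Fin.cons_zero, Fin.cons_succ, Fin.zero_succAbove]
    rw [lintegral_prod_mul (hf 0).aemeasurable htail.aemeasurable, ih _ fun i => hf i.succ]

theorem lintegral_pi_fin_succ_eq_lintegral_snoc {E : Type*} [MeasurableSpace E]
    (μ : Measure E) [SigmaFinite μ] {n : ℕ} {F : (Fin (n + 1) → E) → ℝ≥0∞}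
    (hF : Measurable F) :
    ∫⁻ k, F k ∂Measure.pi (fun _ => μ) =
      ∫⁻ y, ∫⁻ x, F (Fin.snoc y x) ∂μ ∂Measure.pi (fun _ => μ) := by
  set e := MeasurableEquiv.piFinSuccAbove (fun _ : Fin (n + 1) => E) (Fin.last n)
  rw [← (measurePreserving_piFinSuccAbove (fun _ => μ) (Fin.last n)).symm.lintegral_comp hF,
    lintegral_prod_symm (f := fun a => F (e.symm a)) (hF.comp e.symm.measurable).aemeasurable]
  simp only [e, MeasurableEquiv.piFinSuccAbove_symm_apply, Fin.insertNthEquiv_last]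
  rfl

theorem lintegral_mul_comp_sub_le_one {G : Type*} [MeasurableSpace G] [AddGroup G]
    [MeasurableAdd G] [MeasurableNeg G] (μ : Measure G) [μ.IsAddLeftInvariant]
    [μ.IsNegInvariant] {f g : G → ℝ≥0∞} (hf : AEMeasurable f μ) (hg : Measurable g)
    (hf2 : ∫⁻ x, f x ^ 2 ∂μ ≤ 1) (hg2 : ∫⁻ x, g x ^ 2 ∂μ ≤ 1) (c : G) :
    ∫⁻ x, f x * g (c - x) ∂μ ≤ 1 := by
  have hg2' : ∫⁻ x, g (c - x) ^ 2 ∂μ ≤ 1 := by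
    rwa [(Measure.measurePreserving_sub_left μ c).lintegral_comp (hg.pow_const 2)]
  have hCS := ENNReal.lintegral_mul_le_Lp_mul_Lq μ Real.HolderConjugate.two_two hf
    (hg.comp (measurable_id.const_sub c)).aemeasurable
  simp only [ENNReal.rpow_two, Pi.mul_apply, Function.comp_apply] at hCS
  calc ∫⁻ x, f x * g (c - x) ∂μ
      ≤ (∫⁻ x, f x ^ 2 ∂μ) ^ (1 / 2 : ℝ) * (∫⁻ x, g (c - x) ^ 2 ∂μ) ^ (1 / 2 : ℝ) := hCS
    _ ≤ 1 := mul_le_one' (ENNReal.rpow_le_one hf2 (by norm_num))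
        (ENNReal.rpow_le_one hg2' (by norm_num))

theorem lintegral_prod_mul_comp_sub_sum_le {G : Type*} [MeasurableSpace G] [AddCommGroup G]
    [MeasurableAdd₂ G] [MeasurableNeg G] (μ : Measure G) [SigmaFinite μ]
    [μ.IsAddLeftInvariant] [μ.IsNegInvariant] {n : ℕ} {f : Fin (n + 1) → G → ℝ≥0∞}
    {g : G → ℝ≥0∞} (hf : ∀ j, Measurable (f j)) (hg : Measurable g)
    (hf2 : ∫⁻ x, f (Fin.last n) x ^ 2 ∂μ ≤ 1) (hg2 : ∫⁻ x, g x ^ 2 ∂μ ≤ 1) (ψ : G) :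
    ∫⁻ k, (∏ j, f j (k j)) * g (ψ - ∑ j, k j) ∂Measure.pi (fun _ => μ) ≤
      ∏ j : Fin n, ∫⁻ x, f j.castSucc x ∂μ := by
  have hF : Measurable fun k : Fin (n + 1) → G => (∏ j, f j (k j)) * g (ψ - ∑ j, k j) :=
    (Finset.measurable_prod _ fun j _ => (hf j).comp (measurable_pi_apply j)).mul
      (hg.comp (measurable_const.sub (Finset.measurable_sum _ fun j _ => measurable_pi_apply j)))
  rw [lintegral_pi_fin_succ_eq_lintegral_snoc μ hF,
    ← lintegral_fin_nat_prod_eq_prod _ fun j => hf j.castSucc]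
  refine lintegral_mono fun y => ?_
  simp only [Fin.prod_univ_castSucc, Fin.sum_univ_castSucc, Fin.snoc_castSucc, Fin.snoc_last]
  have hinner : Measurable fun x => f (Fin.last n) x * g ((ψ - ∑ j, y j) - x) :=
    (hf _).mul (hg.comp (measurable_id.const_sub _))
  calc ∫⁻ x, (∏ j : Fin n, f j.castSucc (y j)) * f (Fin.last n) x * g (ψ - (∑ j, y j + x)) ∂μ
      = (∏ j : Fin n, f j.castSucc (y j)) *
          ∫⁻ x, f (Fin.last n) x * g ((ψ - ∑ j, y j) - x) ∂μ := by
        rw [← lintegral_const_mul _ hinner]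
        simp only [mul_assoc, sub_add_eq_sub_sub]
    _ ≤ ∏ j : Fin n, f j.castSucc (y j) :=
        mul_le_of_le_one_right' (lintegral_mul_comp_sub_le_one μ (hf _).aemeasurable hg hf2 hg2 _)

theorem taper_prod_asymp_general
    (d m : ℕ) (hr : 3 ≤ m + 1)
    (H : Fin (m + 1) → ℕ → (Fin d → ℝ) → ℂ)
    (hmeas : ∀ j n, Measurable (H j n))
    (hL2 : ∀ j n, ∫⁻ k : Fin d → ℝ, (‖H j n k‖₊ : ℝ≥0∞) ^ (2 : ℕ) = 1)
    (hL1 : ∀ j, Tendsto (fun n => ∫⁻ k : Fin d → ℝ, (‖H j n k‖₊ : ℝ≥0∞))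
      atTop (nhds 0)) :
    ∀ ψ : Fin d → ℝ,
      Tendsto (fun n => ∫⁻ k : Fin m → (Fin d → ℝ),
        (∏ j : Fin m, (‖H j.castSucc n (k j)‖₊ : ℝ≥0∞)) *
          (‖H (Fin.last m) n (ψ - ∑ j : Fin m, k j)‖₊ : ℝ≥0∞)) atTop (nhds 0) := by
  intro ψ
  obtain ⟨p, rfl⟩ : ∃ p, m = p + 1 := ⟨m - 1, by omega⟩
  have hprod : Tendsto (fun n => ∏ j : Fin p, ∫⁻ x, (‖H j.castSucc.castSucc n x‖₊ : ℝ≥0∞))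
      atTop (nhds 0) := by
    have hp : p ≠ 0 := by omega
    simpa [Finset.prod_const, zero_pow hp] using
      ENNReal.tendsto_finsetProd_of_ne_top Finset.univ
        (fun (j : Fin p) _ => hL1 j.castSucc.castSucc) fun _ _ => ENNReal.zero_ne_top
  refine tendsto_of_tendsto_of_tendsto_of_le_of_le tendsto_const_nhds hprod (fun _ => zero_le)
    fun n => ?_
  exact lintegral_prod_mul_comp_sub_sum_le volume (fun j => (hmeas _ n).enorm) (hmeas _ n).enorm
    (hL2 _ n).le (hL2 _ n).le ψ

/-- If each sequence of transfer functions has unit `L²` norm and `L¹` norm tending to `0`,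
then the multilinear integral `Ĩ_{r,n}(ψ)` tends to `0` as `n → ∞`, for `r = m+1 ≥ 3`. -/
theorem taper_prod_asymp
    (d m : ℕ) (hd : 1 ≤ d) (hr : 3 ≤ m + 1)
    (H : Fin (m + 1) → ℕ → (Fin d → ℝ) → ℂ)
    (hmeas : ∀ j n, Measurable (H j n))
    (hL2 : ∀ j n, ∫⁻ k : Fin d → ℝ, (‖H j n k‖₊ : ℝ≥0∞) ^ (2 : ℕ) = 1)
    (hL1 : ∀ j, Tendsto (fun n => ∫⁻ k : Fin d → ℝ, (‖H j n k‖₊ : ℝ≥0∞))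
      atTop (nhds 0)) :
    ∀ ψ : Fin d → ℝ,
      Tendsto (fun n => ∫⁻ k : Fin m → (Fin d → ℝ),
        (∏ j : Fin m, (‖H j.castSucc n (k j)‖₊ : ℝ≥0∞)) *
          (‖H (Fin.last m) n (ψ - ∑ j : Fin m, k j)‖₊ : ℝ≥0∞)) atTop (nhds 0) :=
  taper_prod_asymp_general d m hr H hmeas hL2 hL1
end

section
/- Let d ≥ 1, let Δ ∈ ℝ^d have all coordinates positive with Δ̄ = ∏_{j=1}^d Δ_j, let s ∈ ℝ^d, and let G = {z∘Δ + s : z ∈ ℤ^d}. For a finitely supported function g : G → ℝ, define its linear interpolation I[g] : ℝ^d → ℝ by I[g](u) = (1/Δ̄) Σ_{z∈G} 𝟙_{∏_j[0,Δ_j)}(u−z) Σ_{v∈{0,1}^d} g(z+v∘Δ) ∏_{j=1}^d (u_j−z_j)^{v_j}(Δ_j−u_j+z_j)^{1−v_j}. Then for finitely supported g, h : G → ℝ, ∫_{ℝ^d} I[g](u) I[h](u) du = Δ̄ Σ_{z∈G} g(z)h(z) + Δ̄·ε, where |ε| ≤ (Σ_{z∈G}|g(z)|) · sup_{v∈{0,1}^d,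 z∈G} |h(z+v∘Δ)−h(z)| + (Σ_{z∈G}|h(z)|) · sup_{v∈{0,1}^d, z∈G} |g(z+v∘Δ)−g(z)|. -/
/-!
On the cell `ζ∘Δ + s + ∏ⱼ [0, Δⱼ)` the interpolant is `I[g] = ∑_v g(ζ + v) w_v` with the
multilinear corner weights `w_v ≥ 0`, which sum to `1` and all have integral `Δ̄ / 2^d`. So
`|I[g] - g(ζ)|` is at most the oscillation `ω_g` of `g`, and the cell integral of `I[h]` is `Δ̄`
times the mean of `h` over the corners, within `Δ̄ ω_h` of `Δ̄ h(ζ)`. Splitting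
`I[g] I[h] = (I[g] - g(ζ)) I[h] + g(ζ) I[h]` on each cell gives the cell error
`Δ̄ 2^{-d} ω_g ∑_v |h(ζ + v)| + Δ̄ ω_h |g(ζ)|`; summing over the finitely many cells meeting the
supports, each `h(z)` is counted `2^d` times.
-/

open MeasureTheory
open scoped BigOperators

/-- The linear interpolation `I[g]` of a function `g` defined on the grid
`G = {z∘Δ + s : z ∈ ℤ^d}` (grid points indexed by `ζ ∈ ℤ^d`). -/
noncomputable def interpol (d : ℕ) (Δ s : Fin d → ℝ) (g : (Fin d → ℤ) → ℝ)
    (u : Fin d → ℝ) : ℝ :=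
  (∏ j, Δ j)⁻¹ *
    ∑' ζ : Fin d → ℤ,
      (if ∀ j, u j - ((ζ j : ℝ) * Δ j + s j) ∈ Set.Ico (0 : ℝ) (Δ j) then (1 : ℝ) else 0) *
        ∑ v : Fin d → Bool,
          g (fun j => ζ j + if v j then 1 else 0) *
            ∏ j, (u j - ((ζ j : ℝ) * Δ j + s j)) ^ (if v j then 1 else 0) *
              (Δ j - u j + ((ζ j : ℝ) * Δ j + s j)) ^ (if v j then 0 else 1)

open Finset

theorem abs_sum_mul_sub_mul_sum_le {ι : Type*} (t : Finset ι) {a w : ι → ℝ} {b ω : ℝ}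
    (hw : ∀ i ∈ t, 0 ≤ w i) (ha : ∀ i ∈ t, |a i - b| ≤ ω) :
    |∑ i ∈ t, a i * w i - b * ∑ i ∈ t, w i| ≤ ω * ∑ i ∈ t, w i := by
  rw [mul_sum, mul_sum, ← sum_sub_distrib]
  refine (abs_sum_le_sum_abs _ _).trans (sum_le_sum fun i hi => ?_)
  rw [← sub_mul, abs_mul, abs_of_nonneg (hw i hi)]
  exact mul_le_mul_of_nonneg_right (ha i hi) (hw i hi)

theorem abs_sub_comp_le_iSup_iSup {α κ : Type*} [Finite κ] {f : α → ℝ}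
    (hf : (Function.support f).Finite) (σ : κ → α → α) (k : κ) (a : α) :
    |f (σ k a) - f a| ≤ ⨆ k, ⨆ a, |f (σ k a) - f a| := by
  have hfs : Summable fun a => |f a| :=
    summable_of_hasFiniteSupport (Function.HasFiniteSupport.fun_comp hf abs_zero)
  have hle (b : α) : |f b| ≤ ∑' a, |f a| := hfs.le_tsum b fun _ _ => abs_nonneg _
  have hbdd (k : κ) : BddAbove (Set.range fun a => |f (σ k a) - f a|) := by
    refine ⟨2 * ∑' a, |f a|, ?_⟩
    rintro _ ⟨a, rfl⟩
    linarith [abs_sub (f (σ k a)) (f a), hle a, hle (σ k a)]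
  exact (le_ciSup (hbdd k) a).trans <|
    le_ciSup (f := fun k => ⨆ a, |f (σ k a) - f a|) (Set.finite_range _).bddAbove k

section PartitionOfUnity

variable {α ι : Type*} [MeasurableSpace α] {μ : Measure α} [Fintype ι] {w : ι → α → ℝ}

theorem integral_sum_mul_eq (hw : ∀ i, Integrable (w i) μ) {c : ℝ}
    (hc : ∀ i, ∫ x, w i x ∂μ = c) (a : ι → ℝ) :
    ∫ x, ∑ i, a i * w i x ∂μ = ∑ i, a i * c := by
  rw [integral_finsetSum _ fun i _ => (hw i).const_mul (a i)]
  simp only [integral_const_mul, hc]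

theorem abs_integral_sum_mul_sub_le (hw : ∀ i, Integrable (w i) μ)
    (hw_nonneg : ∀ i, 0 ≤ᵐ[μ] w i) {c : ℝ} (hc : ∀ i, ∫ x, w i x ∂μ = c)
    {a : ι → ℝ} {a₀ ω : ℝ} (ha : ∀ i, |a i - a₀| ≤ ω) :
    |∫ x, ∑ i, a i * w i x ∂μ - a₀ * (Fintype.card ι * c)| ≤ ω * (Fintype.card ι * c) := by
  have hc_nonneg (i : ι) : 0 ≤ c := hc i ▸ integral_nonneg_of_ae (hw_nonneg i)
  simpa [integral_sum_mul_eq hw hc] using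
    abs_sum_mul_sub_mul_sum_le univ (w := fun _ => c) (fun i _ => hc_nonneg i) (fun i _ => ha i)

theorem abs_integral_sum_mul_mul_sum_mul_sub_le (hw : ∀ i, Integrable (w i) μ)
    (hw_nonneg : ∀ i, 0 ≤ᵐ[μ] w i) (hw_sum : ∀ x, ∑ i, w i x = 1) {c : ℝ}
    (hc : ∀ i, ∫ x, w i x ∂μ = c) {a b : ι → ℝ} {a₀ b₀ ωa ωb : ℝ}
    (ha : ∀ i, |a i - a₀| ≤ ωa) (hb : ∀ i, |b i - b₀| ≤ ωb) :
    |∫ x, (∑ i, a i * w i x) * (∑ i, b i * w i x) ∂μ - a₀ * b₀ * (Fintype.card ι * c)| ≤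
      ωa * ∑ i, |b i| * c + |a₀| * (ωb * (Fintype.card ι * c)) := by
  set A := fun x => ∑ i, a i * w i x
  set B := fun x => ∑ i, b i * w i x
  have hB : Integrable B μ := integrable_finsetSum _ fun i _ => (hw i).const_mul (b i)
  have hB_abs : Integrable (fun x => ∑ i, |b i| * w i x) μ :=
    integrable_finsetSum _ fun i _ => (hw i).const_mul |b i|
  have hA_near : ∀ᵐ x ∂μ, |A x - a₀| ≤ ωa := by
    filter_upwards [ae_all_iff.2 hw_nonneg] with x hx
    simpa [hw_sum x] using abs_sum_mul_sub_mul_sum_le univ (fun i _ => hx i) (fun i _ => ha i)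
  have hB_le : ∀ᵐ x ∂μ, |B x| ≤ ∑ i, |b i| * w i x := by
    filter_upwards [ae_all_iff.2 hw_nonneg] with x hx
    refine (abs_sum_le_sum_abs _ _).trans_eq (sum_congr rfl fun i _ => ?_)
    rw [abs_mul, abs_of_nonneg (hx i)]
  have hA : Integrable A μ := integrable_finsetSum _ fun i _ => (hw i).const_mul (a i)
  have hAB : Integrable (fun x => (A x - a₀) * B x) μ :=
    hB.bdd_mul (hA.aestronglyMeasurable.sub aestronglyMeasurable_const) hA_near
  have hsplit : ∫ x, A x * B x ∂μ - a₀ * b₀ * (Fintype.card ι * c) =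
      ∫ x, (A x - a₀) * B x ∂μ + a₀ * (∫ x, B x ∂μ - b₀ * (Fintype.card ι * c)) := by
    have hAB_eq : (fun x => A x * B x) = fun x => (A x - a₀) * B x + a₀ * B x := by
      ext x; ring
    rw [hAB_eq, integral_add hAB (hB.const_mul a₀), integral_const_mul]
    ring
  rw [hsplit]
  refine (abs_add_le _ _).trans (add_le_add ?_ ?_)
  · calc |∫ x, (A x - a₀) * B x ∂μ| ≤ ∫ x, ωa * ∑ i, |b i| * w i x ∂μ := by
          rw [← Real.norm_eq_abs]
          refine norm_integral_le_of_norm_le (hB_abs.const_mul ωa) ?_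
          filter_upwards [hA_near, hB_le] with x hxA hxB
          rw [Real.norm_eq_abs, abs_mul]
          exact mul_le_mul hxA hxB (abs_nonneg _) ((abs_nonneg _).trans hxA)
      _ = ωa * ∑ i, |b i| * c := by rw [integral_const_mul, integral_sum_mul_eq hw hc]
  · rw [abs_mul]
    exact mul_le_mul_of_nonneg_left (abs_integral_sum_mul_sub_le hw hw_nonneg hc hb) (abs_nonneg _)

end PartitionOfUnity

theorem setIntegral_Ico_linear_div (a δ : ℝ) (hδ : 0 < δ) (b : Bool) :
    ∫ x in Set.Ico a (a + δ), (if b then x - a else δ - x + a) / δ = δ / 2 := by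
  rw [integral_Ico_eq_integral_Ioc, ← intervalIntegral.integral_of_le (by linarith),
    intervalIntegral.integral_div]
  cases b <;> simp [sub_add_eq_add_sub, intervalIntegral.integral_comp_sub_right (fun x => x),
    intervalIntegral.integral_comp_sub_left (fun x => x)] <;> field_simp
  ring

section Cells

variable {ι : Type*}

def gridPoint (Δ s : ι → ℝ) (ζ : ι → ℤ) (j : ι) : ℝ := ζ j * Δ j + s j

def cell (Δ s : ι → ℝ) (ζ : ι → ℤ) : Set (ι → ℝ) :=
  Set.univ.pi fun j => Set.Ico (gridPoint Δ s ζ j) (gridPoint Δ s ζ j + Δ j)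

def corner (ζ : ι → ℤ) (v : ι → Bool) : ι → ℤ := fun j => ζ j + if v j then 1 else 0

noncomputable def cornerWeight [Fintype ι] (Δ s : ι → ℝ) (ζ : ι → ℤ) (v : ι → Bool)
    (u : ι → ℝ) : ℝ :=
  ∏ j, (if v j then u j - gridPoint Δ s ζ j else Δ j - u j + gridPoint Δ s ζ j) / Δ j

variable {Δ s : ι → ℝ}

theorem mem_cell_iff {ζ : ι → ℤ} {u : ι → ℝ} :
    u ∈ cell Δ s ζ ↔ ∀ j, u j - (ζ j * Δ j + s j) ∈ Set.Ico 0 (Δ j) := by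
  simp only [cell, gridPoint, Set.mem_univ_pi, Set.sub_mem_Ico_iff_left, zero_add, add_comm (Δ _)]

theorem floor_eq_of_mem_cell {ζ : ι → ℤ} {u : ι → ℝ} (hu : u ∈ cell Δ s ζ) (j : ι) :
    ⌊(u j - s j) / Δ j⌋ = ζ j := by
  obtain ⟨h₁, h₂⟩ := Set.mem_univ_pi.1 hu j
  have hΔ : 0 < Δ j := by linarith
  rw [Int.floor_eq_iff, le_div_iff₀ hΔ, div_lt_iff₀ hΔ]
  simp only [gridPoint] at h₁ h₂
  constructor <;> linarith

theorem eq_of_mem_cell_of_mem_cell {ζ ζ' : ι → ℤ} {u : ι → ℝ} (hu : u ∈ cell Δ s ζ)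
    (hu' : u ∈ cell Δ s ζ') : ζ = ζ' :=
  funext fun j => (floor_eq_of_mem_cell hu j).symm.trans (floor_eq_of_mem_cell hu' j)

theorem corner_injective (v : ι → Bool) : Function.Injective (corner · v) :=
  fun _ _ h => funext fun j => add_right_cancel (congrFun h j)

theorem finite_setOf_exists_corner_ne_zero [Finite ι] {g : (ι → ℤ) → ℝ}
    (hg : (Function.support g).Finite) : {ζ | ∃ v, g (corner ζ v) ≠ 0}.Finite := by
  refine (Set.finite_iUnion fun v => hg.preimage (corner_injective v).injOn).subset ?_
  exact fun ζ ⟨v, hv⟩ => Set.mem_iUnion.2 ⟨v, hv⟩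

theorem corner_false (ζ : ι → ℤ) : corner ζ (fun _ => false) = ζ := by
  ext j; simp [corner]

variable [Fintype ι]

theorem measurableSet_cell (ζ : ι → ℤ) : MeasurableSet (cell Δ s ζ) :=
  MeasurableSet.univ_pi fun _ => measurableSet_Ico

theorem Continuous.integrableOn_cell {f : (ι → ℝ) → ℝ} (hf : Continuous f) (ζ : ι → ℤ) :
    IntegrableOn f (cell Δ s ζ) :=
  hf.integrableOn_Icc.mono_set <| by
    rw [cell, ← Set.pi_univ_Icc]
    exact Set.pi_mono fun _ _ => Set.Ico_subset_Icc_self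

theorem sum_cornerWeight [DecidableEq ι] (hΔ : ∀ j, Δ j ≠ 0) (ζ : ι → ℤ) (u : ι → ℝ) :
    ∑ v, cornerWeight Δ s ζ v u = 1 := by
  simp only [cornerWeight]
  rw [← Fintype.prod_sum fun j (b : Bool) =>
    (if b then u j - gridPoint Δ s ζ j else Δ j - u j + gridPoint Δ s ζ j) / Δ j,
    Finset.prod_eq_one fun j _ => ?_]
  rw [Fintype.sum_bool, if_pos rfl, if_neg Bool.false_ne_true, ← add_div, div_eq_one_iff_eq (hΔ j)]
  ring

theorem cornerWeight_nonneg {ζ : ι → ℤ} {u : ι → ℝ} (hu : u ∈ cell Δ s ζ) (v : ι → Bool) :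
    0 ≤ cornerWeight Δ s ζ v u := by
  refine prod_nonneg fun j _ => ?_
  obtain ⟨h₁, h₂⟩ := Set.mem_univ_pi.1 hu j
  split_ifs <;> apply div_nonneg <;> linarith

theorem continuous_cornerWeight (ζ : ι → ℤ) (v : ι → Bool) :
    Continuous (cornerWeight Δ s ζ v) :=
  continuous_finsetProd _ fun j _ => by split_ifs <;> fun_prop

theorem setIntegral_cornerWeight (hΔ : ∀ j, 0 < Δ j) (ζ : ι → ℤ) (v : ι → Bool) :
    ∫ u in cell Δ s ζ, cornerWeight Δ s ζ v u = (∏ j, Δ j) / 2 ^ Fintype.card ι := by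
  rw [cell, volume_pi, Measure.restrict_pi_pi]
  simp only [cornerWeight]
  rw [integral_fintype_prod_eq_prod (fun j x =>
    (if v j then x - gridPoint Δ s ζ j else Δ j - x + gridPoint Δ s ζ j) / Δ j)]
  simp only [setIntegral_Ico_linear_div _ _ (hΔ _), prod_div_distrib, prod_const, card_univ]

theorem sum_sum_abs_corner_le [DecidableEq ι] {h : (ι → ℤ) → ℝ}
    (hh : Summable fun ζ => |h ζ|) (S : Finset (ι → ℤ)) :
    ∑ ζ ∈ S, ∑ v, |h (corner ζ v)| ≤ 2 ^ Fintype.card ι * ∑' ζ, |h ζ| := by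
  rw [sum_comm]
  calc ∑ v, ∑ ζ ∈ S, |h (corner ζ v)| ≤ ∑ _v : ι → Bool, ∑' ζ, |h ζ| :=
        sum_le_sum fun v _ => (sum_map S ⟨_, corner_injective v⟩ fun ζ => |h ζ|).symm.trans_le
          (hh.sum_le_tsum _ fun _ _ => abs_nonneg _)
    _ = 2 ^ Fintype.card ι * ∑' ζ, |h ζ| := by simp

theorem integral_eq_sum_setIntegral_cell {f : (ι → ℝ) → ℝ} (S : Finset (ι → ℤ))
    (hf : ∀ u, (∀ ζ ∈ S, u ∉ cell Δ s ζ) → f u = 0)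
    (hf_int : ∀ ζ ∈ S, IntegrableOn f (cell Δ s ζ)) :
    ∫ u, f u = ∑ ζ ∈ S, ∫ u in cell Δ s ζ, f u := by
  rw [← integral_biUnion_finset S (fun ζ _ => measurableSet_cell ζ) ?_ hf_int,
    setIntegral_eq_integral_of_forall_compl_eq_zero]
  · intro u hu
    exact hf u fun ζ hζ hu' => hu (Set.mem_biUnion hζ hu')
  · exact fun ζ _ ζ' _ hne => Set.disjoint_left.2 fun u hu hu' =>
      hne (eq_of_mem_cell_of_mem_cell hu hu')

end Cells

section Interpolation

variable {d : ℕ} {Δ s : Fin d → ℝ}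

theorem interpol_eq_sum_cornerWeight (g : (Fin d → ℤ) → ℝ) {ζ : Fin d → ℤ} {u : Fin d → ℝ}
    (hu : u ∈ cell Δ s ζ) :
    interpol d Δ s g u = ∑ v, g (corner ζ v) * cornerWeight Δ s ζ v u := by
  rw [interpol, tsum_eq_single ζ, if_pos (mem_cell_iff.1 hu), one_mul, mul_sum]
  · refine sum_congr rfl fun v _ => ?_
    rw [cornerWeight, prod_div_distrib, mul_left_comm, ← div_eq_inv_mul]
    congr 3 with j
    cases v j <;> simp [gridPoint]
  · intro ζ' hne
    rw [if_neg fun h => hne (eq_of_mem_cell_of_mem_cell (mem_cell_iff.2 h) hu), zero_mul]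

theorem interpol_eq_zero {g : (Fin d → ℤ) → ℝ} {u : Fin d → ℝ}
    (hg : ∀ ζ, u ∈ cell Δ s ζ → ∀ v, g (corner ζ v) = 0) : interpol d Δ s g u = 0 := by
  rw [interpol, tsum_congr fun ζ => ?_, tsum_zero, mul_zero]
  split_ifs with hu
  · exact mul_eq_zero_of_right _
      (sum_eq_zero fun v _ => mul_eq_zero_of_left (hg ζ (mem_cell_iff.2 hu) v) _)
  · exact zero_mul _

theorem eqOn_cell_interpol_mul (g h : (Fin d → ℤ) → ℝ) (ζ : Fin d → ℤ) :
    Set.EqOn (fun u => interpol d Δ s g u * interpol d Δ s h u)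
      (fun u => (∑ v, g (corner ζ v) * cornerWeight Δ s ζ v u) *
        ∑ v, h (corner ζ v) * cornerWeight Δ s ζ v u) (cell Δ s ζ) := fun _ hu => by
  simp only [interpol_eq_sum_cornerWeight _ hu]

theorem integrableOn_cell_interpol_mul (g h : (Fin d → ℤ) → ℝ) (ζ : Fin d → ℤ) :
    IntegrableOn (fun u => interpol d Δ s g u * interpol d Δ s h u) (cell Δ s ζ) := by
  refine Continuous.integrableOn_cell ?_ ζ |>.congr_fun
    (eqOn_cell_interpol_mul g h ζ).symm (measurableSet_cell ζ)
  have := continuous_cornerWeight (Δ := Δ) (s := s) ζ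
  fun_prop

theorem abs_setIntegral_cell_interpol_mul_sub_le (hΔ : ∀ j, 0 < Δ j) (g h : (Fin d → ℤ) → ℝ)
    (ζ : Fin d → ℤ) {ωg ωh : ℝ} (hωg : ∀ v, |g (corner ζ v) - g ζ| ≤ ωg)
    (hωh : ∀ v, |h (corner ζ v) - h ζ| ≤ ωh) :
    |(∫ u in cell Δ s ζ, interpol d Δ s g u * interpol d Δ s h u) - (∏ j, Δ j) * (g ζ * h ζ)| ≤
      (∏ j, Δ j) / 2 ^ d * ωg * ∑ v, |h (corner ζ v)| + (∏ j, Δ j) * ωh * |g ζ| := by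
  have hcard : (Fintype.card (Fin d → Bool) : ℝ) * ((∏ j, Δ j) / 2 ^ d) = ∏ j, Δ j := by
    simp [mul_div_cancel₀]
  have hc (v : Fin d → Bool) : ∫ u in cell Δ s ζ, cornerWeight Δ s ζ v u = (∏ j, Δ j) / 2 ^ d := by
    rw [setIntegral_cornerWeight hΔ, Fintype.card_fin]
  calc _ = |(∫ u in cell Δ s ζ, (∑ v, g (corner ζ v) * cornerWeight Δ s ζ v u) *
          ∑ v, h (corner ζ v) * cornerWeight Δ s ζ v u) -
          g ζ * h ζ * (Fintype.card (Fin d → Bool) * ((∏ j, Δ j) / 2 ^ d))| := by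
        rw [setIntegral_congr_fun (measurableSet_cell ζ) (eqOn_cell_interpol_mul g h ζ), hcard,
          mul_comm (∏ j, Δ j)]
    _ ≤ ωg * ∑ v, |h (corner ζ v)| * ((∏ j, Δ j) / 2 ^ d) +
          |g ζ| * (ωh * (Fintype.card (Fin d → Bool) * ((∏ j, Δ j) / 2 ^ d))) :=
        abs_integral_sum_mul_mul_sum_mul_sub_le
          (fun v => (continuous_cornerWeight ζ v).integrableOn_cell ζ)
          (fun v => (ae_restrict_iff' (measurableSet_cell ζ)).2 (.of_forall fun u hu =>
            cornerWeight_nonneg hu v))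
          (sum_cornerWeight (fun j => (hΔ j).ne') ζ) hc hωg hωh
    _ = _ := by
        rw [hcard, ← sum_mul]
        ring

theorem abs_integral_interpol_mul_sub_le (hΔ : ∀ j, 0 < Δ j) {g h : (Fin d → ℤ) → ℝ}
    (hg : (Function.support g).Finite) (hh : (Function.support h).Finite) {ωg ωh : ℝ}
    (hωg : ∀ ζ v, |g (corner ζ v) - g ζ| ≤ ωg) (hωh : ∀ ζ v, |h (corner ζ v) - h ζ| ≤ ωh) :
    |(∫ u, interpol d Δ s g u * interpol d Δ s h u) - (∏ j, Δ j) * ∑' ζ, g ζ * h ζ| ≤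
      (∏ j, Δ j) * ((∑' ζ, |g ζ|) * ωh + (∑' ζ, |h ζ|) * ωg) := by
  set P := ∏ j, Δ j
  have hP : 0 < P := prod_pos fun j _ => hΔ j
  have hωg₀ : 0 ≤ ωg := (abs_nonneg _).trans (hωg 0 0)
  have hωh₀ : 0 ≤ ωh := (abs_nonneg _).trans (hωh 0 0)
  have hgs : Summable fun ζ => |g ζ| :=
    summable_of_hasFiniteSupport (Function.HasFiniteSupport.fun_comp hg abs_zero)
  have hhs : Summable fun ζ => |h ζ| :=
    summable_of_hasFiniteSupport (Function.HasFiniteSupport.fun_comp hh abs_zero)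
  obtain ⟨S, hS⟩ : ∃ S : Finset (Fin d → ℤ),
      ∀ ζ ∉ S, ∀ v, g (corner ζ v) = 0 ∧ h (corner ζ v) = 0 :=
    ⟨((finite_setOf_exists_corner_ne_zero hg).union
      (finite_setOf_exists_corner_ne_zero hh)).toFinset, fun ζ hζ v => by
        simp only [Set.Finite.mem_toFinset, Set.mem_union, Set.mem_ofPred_eq, not_or,
          not_exists, not_not] at hζ
        exact ⟨hζ.1 v, hζ.2 v⟩⟩
  have hint : ∫ u, interpol d Δ s g u * interpol d Δ s h u =
      ∑ ζ ∈ S, ∫ u in cell Δ s ζ, interpol d Δ s g u * interpol d Δ s h u :=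
    integral_eq_sum_setIntegral_cell S (fun u hu => by
      rw [interpol_eq_zero fun ζ hζ v => (hS ζ (fun hS' => hu ζ hS' hζ) v).1, zero_mul])
      fun ζ _ => integrableOn_cell_interpol_mul g h ζ
  have htsum : ∑' ζ, g ζ * h ζ = ∑ ζ ∈ S, g ζ * h ζ := tsum_eq_sum fun ζ hζ => by
    rw [← corner_false ζ, (hS ζ hζ _).1, zero_mul]
  rw [hint, htsum, mul_sum, ← sum_sub_distrib]
  calc _ ≤ ∑ ζ ∈ S, (P / 2 ^ d * ωg * ∑ v, |h (corner ζ v)| + P * ωh * |g ζ|) :=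
        (abs_sum_le_sum_abs _ _).trans (sum_le_sum fun ζ _ =>
          abs_setIntegral_cell_interpol_mul_sub_le hΔ g h ζ (hωg ζ) (hωh ζ))
    _ = P / 2 ^ d * ωg * ∑ ζ ∈ S, ∑ v, |h (corner ζ v)| + P * ωh * ∑ ζ ∈ S, |g ζ| := by
        rw [sum_add_distrib, ← mul_sum, ← mul_sum]
    _ ≤ P / 2 ^ d * ωg * (2 ^ d * ∑' ζ, |h ζ|) + P * ωh * ∑' ζ, |g ζ| := by
        gcongr
        · simpa using sum_sum_abs_corner_le hhs S
        · exact hgs.sum_le_tsum _ fun _ _ => abs_nonneg _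
    _ = P * ((∑' ζ, |g ζ|) * ωh + (∑' ζ, |h ζ|) * ωg) := by
        field_simp
        ring

end Interpolation

theorem interpol_inner_product_general
    (d : ℕ) (Δ s : Fin d → ℝ) (hΔ : ∀ j, 0 < Δ j)
    (g h : (Fin d → ℤ) → ℝ)
    (hg : (Function.support g).Finite) (hh : (Function.support h).Finite) :
    ∃ ε : ℝ,
      (∫ u : Fin d → ℝ, interpol d Δ s g u * interpol d Δ s h u) =
        (∏ j, Δ j) * (∑' ζ : Fin d → ℤ, g ζ * h ζ) + (∏ j, Δ j) * ε ∧
      |ε| ≤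
        (∑' ζ : Fin d → ℤ, |g ζ|) *
            (⨆ v : Fin d → Bool, ⨆ ζ : Fin d → ℤ,
              |h (fun j => ζ j + if v j then 1 else 0) - h ζ|) +
          (∑' ζ : Fin d → ℤ, |h ζ|) *
            (⨆ v : Fin d → Bool, ⨆ ζ : Fin d → ℤ,
              |g (fun j => ζ j + if v j then 1 else 0) - g ζ|) := by
  have hP : 0 < ∏ j, Δ j := prod_pos fun j _ => hΔ j
  have hbound := abs_integral_interpol_mul_sub_le (s := s) hΔ hg hh
    (fun ζ v => abs_sub_comp_le_iSup_iSup hg (fun v ζ => corner ζ v) v ζ)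
    (fun ζ v => abs_sub_comp_le_iSup_iSup hh (fun v ζ => corner ζ v) v ζ)
  refine ⟨((∫ u, interpol d Δ s g u * interpol d Δ s h u) -
    (∏ j, Δ j) * ∑' ζ, g ζ * h ζ) / ∏ j, Δ j, by field_simp; ring, ?_⟩
  rw [abs_div, abs_of_pos hP, div_le_iff₀ hP]
  exact hbound.trans_eq (mul_comm _ _)

/-- The inner product of two linear interpolations of finitely supported grid functions is
`Δ̄ Σ_z g(z)h(z)` up to an error `Δ̄ ε` with
`|ε| ≤ ‖g‖₁ sup|h(z+v∘Δ)-h(z)| + ‖h‖₁ sup|g(z+v∘Δ)-g(z)|`. -/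
theorem interpol_inner_product
    (d : ℕ) (hd : 1 ≤ d) (Δ s : Fin d → ℝ) (hΔ : ∀ j, 0 < Δ j)
    (g h : (Fin d → ℤ) → ℝ)
    (hg : (Function.support g).Finite) (hh : (Function.support h).Finite) :
    ∃ ε : ℝ,
      (∫ u : Fin d → ℝ, interpol d Δ s g u * interpol d Δ s h u) =
        (∏ j, Δ j) * (∑' ζ : Fin d → ℤ, g ζ * h ζ) + (∏ j, Δ j) * ε ∧
      |ε| ≤
        (∑' ζ : Fin d → ℤ, |g ζ|) *
            (⨆ v : Fin d → Bool, ⨆ ζ : Fin d → ℤ,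
              |h (fun j => ζ j + if v j then 1 else 0) - h ζ|) +
          (∑' ζ : Fin d → ℤ, |h ζ|) *
            (⨆ v : Fin d → Bool, ⨆ ζ : Fin d → ℤ,
              |g (fun j => ζ j + if v j then 1 else 0) - g ζ|) :=
  interpol_inner_product_general d Δ s hΔ g h hg hh
end

section
/- Let d ≥ 1 and let c ∈ ℂ. Let (H_n)_{n∈ℕ} and (G_n)_{n∈ℕ} be sequences of square-integrable functions ℝ^d → ℂ with ∫_{ℝ^d} |H_n|² = ∫_{ℝ^d} |G_n|² = 1 and ∫_{ℝ^d} H_n(k) · conj(G_n(k)) dk = c for all n. Suppose there is a sequence of positive reals b_n → 0 such that ∫_{B(0,b_n)} |H_n(k)|² dk → 1 and ∫_{B(0,b_n)} |G_n(k)|² dk → 1 as n → ∞, where B(x,r) denotes the open Euclidean ball of radius r centred at x. Let f : ℝ^d → ℂ be bounded and continuous. Then for all k₁, k₂ ∈ ℝ^d, the integral ∫_{ℝ^d} H_n(k₁−k') · conj(G_n(k₂−k')) · f(k') dk' converges as n → ∞ to c·f(k₁) if k₁ = k₂, and to 0 if k₁ ≠ k₂. -/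
/-!
Put φₙ = Hₙ(k₁ - ·) and ψₙ = Gₙ(k₂ - ·): unit vectors of L² whose mass concentrates at k₁,
resp. k₂. By Cauchy–Schwarz, `∫_s |φₙ| |ψₙ| ≤ (∫_s |φₙ|²)^{1/2}`, so `|φₙ| |ψₙ|` carries
asymptotically no mass off any neighbourhood of k₁ (nor of k₂). If k₁ ≠ k₂ this forces
`∫ |φₙ| |ψₙ| → 0`. If k₁ = k₂, subtracting `c f(k₁) = ∫ φₙ conj ψₙ f(k₁)` leaves an integral
against `f - f(k₁)`, which is small near k₁ by continuity and bounded elsewhere.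
-/

open MeasureTheory Filter
open Metric Topology ComplexConjugate

variable {E : Type*} [NormedAddCommGroup E]

section

variable {α : Type*} [MeasurableSpace α] {μ : Measure α}

theorem integral_norm_mul_norm_le_sqrt_mul_sqrt {φ ψ : α → E}
    (hφ : MemLp φ 2 μ) (hψ : MemLp ψ 2 μ) :
    ∫ x, ‖φ x‖ * ‖ψ x‖ ∂μ ≤ √(∫ x, ‖φ x‖ ^ 2 ∂μ) * √(∫ x, ‖ψ x‖ ^ 2 ∂μ) := by
  have h := integral_mul_norm_le_Lp_mul_Lq Real.HolderConjugate.two_two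
    (by simpa using hφ) (by simpa using hψ)
  simpa only [Real.rpow_two, Real.sqrt_eq_rpow, one_div] using h

theorem integrable_norm_mul_norm {φ ψ : α → E} (hφ : MemLp φ 2 μ) (hψ : MemLp ψ 2 μ) :
    Integrable (fun x => ‖φ x‖ * ‖ψ x‖) μ :=
  hφ.norm.integrable_mul hψ.norm

theorem setIntegral_norm_sq_le_one {ψ : α → E} (hψ : MemLp ψ 2 μ)
    (hψ1 : ∫ x, ‖ψ x‖ ^ 2 ∂μ ≤ 1) (s : Set α) : ∫ x in s, ‖ψ x‖ ^ 2 ∂μ ≤ 1 :=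
  (setIntegral_le_integral (hψ.integrable_norm_pow two_ne_zero)
    (ae_of_all _ fun _ => by positivity)).trans hψ1

theorem tendsto_setIntegral_norm_mul_norm {φ ψ : ℕ → α → E} {s : ℕ → Set α}
    (hφ : ∀ n, MemLp (φ n) 2 μ) (hψ : ∀ n, MemLp (ψ n) 2 μ)
    (hψ1 : ∀ n, ∫ x, ‖ψ n x‖ ^ 2 ∂μ ≤ 1)
    (hs : Tendsto (fun n => ∫ x in s n, ‖φ n x‖ ^ 2 ∂μ) atTop (𝓝 0)) :
    Tendsto (fun n => ∫ x in s n, ‖φ n x‖ * ‖ψ n x‖ ∂μ) atTop (𝓝 0) := by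
  refine squeeze_zero (fun n => integral_nonneg fun _ => by positivity) (fun n => ?_)
    (by simpa using hs.sqrt)
  calc ∫ x in s n, ‖φ n x‖ * ‖ψ n x‖ ∂μ
      ≤ √(∫ x in s n, ‖φ n x‖ ^ 2 ∂μ) * √(∫ x in s n, ‖ψ n x‖ ^ 2 ∂μ) :=
        integral_norm_mul_norm_le_sqrt_mul_sqrt ((hφ n).restrict _) ((hψ n).restrict _)
    _ ≤ √(∫ x in s n, ‖φ n x‖ ^ 2 ∂μ) * 1 := by
        gcongr
        exact Real.sqrt_le_one.mpr (setIntegral_norm_sq_le_one (hψ n) (hψ1 n) _)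
    _ = _ := mul_one _

theorem setIntegral_norm_mul_norm_le_one {φ ψ : α → E} (hφ : MemLp φ 2 μ) (hψ : MemLp ψ 2 μ)
    (hφ1 : ∫ x, ‖φ x‖ ^ 2 ∂μ ≤ 1) (hψ1 : ∫ x, ‖ψ x‖ ^ 2 ∂μ ≤ 1) (s : Set α) :
    ∫ x in s, ‖φ x‖ * ‖ψ x‖ ∂μ ≤ 1 := by
  refine (integral_norm_mul_norm_le_sqrt_mul_sqrt (hφ.restrict s) (hψ.restrict s)).trans ?_
  rw [← Real.sqrt_mul (integral_nonneg fun _ => by positivity), Real.sqrt_le_one]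
  exact mul_le_one₀ (setIntegral_norm_sq_le_one hφ hφ1 s) (integral_nonneg fun _ => by positivity)
    (setIntegral_norm_sq_le_one hψ hψ1 s)

theorem integral_mul_le_of_le_on {h w : α → ℝ} {s : Set α} {ε C : ℝ} (hs : MeasurableSet s)
    (hh : Integrable h μ) (hh0 : ∀ x, 0 ≤ h x) (hw : AEStronglyMeasurable w μ)
    (hw0 : ∀ x, 0 ≤ w x) (hwC : ∀ x, w x ≤ C) (hwε : ∀ x ∈ s, w x ≤ ε) :
    ∫ x, h x * w x ∂μ ≤ ε * ∫ x in s, h x ∂μ + C * ∫ x in sᶜ, h x ∂μ := by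
  have hhw : Integrable (fun x => h x * w x) μ :=
    hh.mul_bdd (c := C) hw (ae_of_all _ fun x => (Real.norm_of_nonneg (hw0 x)).trans_le (hwC x))
  rw [← integral_add_compl hs hhw, ← integral_const_mul, ← integral_const_mul]
  gcongr ?_ + ?_
  · refine setIntegral_mono_on hhw.integrableOn (hh.const_mul ε).integrableOn hs fun x hx => ?_
    rw [mul_comm ε]; exact mul_le_mul_of_nonneg_left (hwε x hx) (hh0 x)
  · refine setIntegral_mono_on hhw.integrableOn (hh.const_mul C).integrableOn hs.compl fun x _ => ?_
    rw [mul_comm C]; exact mul_le_mul_of_nonneg_left (hwC x) (hh0 x)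

theorem integrable_mul_conj {φ ψ : α → ℂ} (hφ : MemLp φ 2 μ) (hψ : MemLp ψ 2 μ) :
    Integrable (fun k => φ k * conj (ψ k)) μ :=
  hφ.integrable_mul hψ.star

def L2MassConcentratesAt [PseudoMetricSpace α] (μ : Measure α) (φ : ℕ → α → E) (x : α) : Prop :=
  ∀ r > 0, Tendsto (fun n => ∫ k in (ball x r)ᶜ, ‖φ n k‖ ^ 2 ∂μ) atTop (𝓝 0)

section PseudoMetric

variable [PseudoMetricSpace α] [OpensMeasurableSpace α]

theorem L2MassConcentratesAt.of_tendsto_setIntegral_ball {φ : ℕ → α → E} {x : α} {b : ℕ → ℝ}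
    (hφ : ∀ n, MemLp (φ n) 2 μ) (hφ1 : ∀ n, ∫ k, ‖φ n k‖ ^ 2 ∂μ ≤ 1)
    (hb : Tendsto b atTop (𝓝 0))
    (hball : Tendsto (fun n => ∫ k in ball x (b n), ‖φ n k‖ ^ 2 ∂μ) atTop (𝓝 1)) :
    L2MassConcentratesAt μ φ x := by
  intro r hr
  have hout : Tendsto (fun n => 1 - ∫ k in ball x (b n), ‖φ n k‖ ^ 2 ∂μ) atTop (𝓝 0) := by
    simpa using hball.const_sub 1
  refine squeeze_zero' (Eventually.of_forall fun n => integral_nonneg fun _ => by positivity)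
    ((hb.eventually_lt_const hr).mono fun n hbn => ?_) hout
  have hint := (hφ n).integrable_norm_pow two_ne_zero
  calc ∫ k in (ball x r)ᶜ, ‖φ n k‖ ^ 2 ∂μ ≤ ∫ k in (ball x (b n))ᶜ, ‖φ n k‖ ^ 2 ∂μ :=
        setIntegral_mono_set hint.integrableOn (ae_of_all _ fun _ => by positivity)
          (Set.compl_subset_compl.mpr (ball_subset_ball hbn.le)).eventuallyLE
    _ = ∫ k, ‖φ n k‖ ^ 2 ∂μ - ∫ k in ball x (b n), ‖φ n k‖ ^ 2 ∂μ := by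
        rw [← integral_add_compl measurableSet_ball hint, add_sub_cancel_left]
    _ ≤ _ := by gcongr; exact hφ1 n

theorem tendsto_integral_norm_mul_norm_mul_of_continuousAt {φ ψ : ℕ → α → E} {x : α}
    {w : α → ℝ} {C : ℝ}
    (hφ : ∀ n, MemLp (φ n) 2 μ) (hψ : ∀ n, MemLp (ψ n) 2 μ)
    (hφ1 : ∀ n, ∫ k, ‖φ n k‖ ^ 2 ∂μ ≤ 1) (hψ1 : ∀ n, ∫ k, ‖ψ n k‖ ^ 2 ∂μ ≤ 1)
    (hφx : L2MassConcentratesAt μ φ x) (hw : AEStronglyMeasurable w μ) (hw0 : ∀ k, 0 ≤ w k)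
    (hwC : ∀ k, w k ≤ C) (hwx : ContinuousAt w x) (hwx0 : w x = 0) :
    Tendsto (fun n => ∫ k, ‖φ n k‖ * ‖ψ n k‖ * w k ∂μ) atTop (𝓝 0) := by
  rw [Metric.tendsto_nhds]
  intro ε hε
  obtain ⟨δ, hδ, hwδ⟩ : ∃ δ > 0, ∀ k ∈ ball x δ, w k < ε / 2 :=
    eventually_nhds_iff_ball.mp (hwx.eventually (gt_mem_nhds (by rw [hwx0]; positivity)))
  have hfar := (tendsto_setIntegral_norm_mul_norm hφ hψ hψ1 (hφx δ hδ)).const_mul C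
  rw [mul_zero] at hfar
  filter_upwards [hfar.eventually_lt_const (half_pos hε)] with n hn
  have hI0 : 0 ≤ ∫ k, ‖φ n k‖ * ‖ψ n k‖ * w k ∂μ :=
    integral_nonneg fun k => mul_nonneg (by positivity) (hw0 k)
  rw [Real.dist_0_eq_abs, abs_of_nonneg hI0]
  calc ∫ k, ‖φ n k‖ * ‖ψ n k‖ * w k ∂μ
      ≤ ε / 2 * ∫ k in ball x δ, ‖φ n k‖ * ‖ψ n k‖ ∂μ
        + C * ∫ k in (ball x δ)ᶜ, ‖φ n k‖ * ‖ψ n k‖ ∂μ :=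
        integral_mul_le_of_le_on measurableSet_ball (integrable_norm_mul_norm (hφ n) (hψ n))
          (fun _ => by positivity) hw hw0 hwC fun k hk => (hwδ k hk).le
    _ ≤ ε / 2 * 1 + C * ∫ k in (ball x δ)ᶜ, ‖φ n k‖ * ‖ψ n k‖ ∂μ := by
        gcongr
        exact setIntegral_norm_mul_norm_le_one (hφ n) (hψ n) (hφ1 n) (hψ1 n) _
    _ < ε := by linarith

theorem tendsto_integral_mul_conj_mul_sub
    {φ ψ : ℕ → α → ℂ} {x : α} {f : α → ℂ} {C : ℝ}
    (hφ : ∀ n, MemLp (φ n) 2 μ) (hψ : ∀ n, MemLp (ψ n) 2 μ)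
    (hφ1 : ∀ n, ∫ k, ‖φ n k‖ ^ 2 ∂μ ≤ 1) (hψ1 : ∀ n, ∫ k, ‖ψ n k‖ ^ 2 ∂μ ≤ 1)
    (hφx : L2MassConcentratesAt μ φ x) (hf : ContinuousAt f x) (hfm : AEStronglyMeasurable f μ)
    (hfC : ∀ k, ‖f k‖ ≤ C) :
    Tendsto (fun n => ∫ k, φ n k * conj (ψ n k) * f k ∂μ
      - (∫ k, φ n k * conj (ψ n k) ∂μ) * f x) atTop (𝓝 0) := by
  have hw := tendsto_integral_norm_mul_norm_mul_of_continuousAt hφ hψ hφ1 hψ1 hφx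
    (hfm.sub aestronglyMeasurable_const).norm (fun _ => norm_nonneg _)
    (fun k => (norm_sub_le _ _).trans (add_le_add (hfC k) (hfC x)))
    (hf.sub continuousAt_const).norm (by simp)
  refine squeeze_zero_norm (fun n => ?_) hw
  have hint := integrable_mul_conj (hφ n) (hψ n)
  rw [← integral_mul_const, ← integral_sub (hint.mul_bdd hfm (ae_of_all _ hfC))
    (hint.mul_const _)]
  refine (norm_integral_le_integral_norm _).trans_eq (integral_congr_ae (ae_of_all _ fun k => ?_))
  simp only [← mul_sub, norm_mul, Complex.norm_conj, Pi.sub_apply]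

end PseudoMetric

section Metric

variable [MetricSpace α] [OpensMeasurableSpace α]

theorem tendsto_integral_norm_mul_norm_of_ne {φ ψ : ℕ → α → E} {x y : α}
    (hφ : ∀ n, MemLp (φ n) 2 μ) (hψ : ∀ n, MemLp (ψ n) 2 μ)
    (hφ1 : ∀ n, ∫ k, ‖φ n k‖ ^ 2 ∂μ ≤ 1) (hψ1 : ∀ n, ∫ k, ‖ψ n k‖ ^ 2 ∂μ ≤ 1)
    (hφx : L2MassConcentratesAt μ φ x) (hψy : L2MassConcentratesAt μ ψ y) (hxy : x ≠ y) :
    Tendsto (fun n => ∫ k, ‖φ n k‖ * ‖ψ n k‖ ∂μ) atTop (𝓝 0) := by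
  set r := dist x y / 2
  have hr : 0 < r := half_pos (dist_pos.mpr hxy)
  have hsub : ball y r ⊆ (ball x r)ᶜ :=
    (ball_disjoint_ball (by rw [add_halves])).subset_compl_left
  have hnear : Tendsto (fun n => ∫ k in ball y r, ‖φ n k‖ * ‖ψ n k‖ ∂μ) atTop (𝓝 0) := by
    refine tendsto_setIntegral_norm_mul_norm hφ hψ hψ1 (squeeze_zero
      (fun n => integral_nonneg fun _ => by positivity) (fun n => ?_) (hφx r hr))
    exact setIntegral_mono_set ((hφ n).integrable_norm_pow two_ne_zero).integrableOn
      (ae_of_all _ fun _ => by positivity) hsub.eventuallyLE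
  have hfar : Tendsto (fun n => ∫ k in (ball y r)ᶜ, ‖φ n k‖ * ‖ψ n k‖ ∂μ) atTop (𝓝 0) := by
    simpa only [mul_comm] using tendsto_setIntegral_norm_mul_norm hψ hφ hφ1 (hψy r hr)
  have hsum := hnear.add hfar
  rw [add_zero] at hsum
  refine hsum.congr fun n => ?_
  rw [integral_add_compl measurableSet_ball (integrable_norm_mul_norm (hφ n) (hψ n))]

theorem tendsto_integral_mul_conj_mul_of_ne
    {φ ψ : ℕ → α → ℂ} {x y : α} {f : α → ℂ} {C : ℝ}
    (hφ : ∀ n, MemLp (φ n) 2 μ) (hψ : ∀ n, MemLp (ψ n) 2 μ)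
    (hφ1 : ∀ n, ∫ k, ‖φ n k‖ ^ 2 ∂μ ≤ 1) (hψ1 : ∀ n, ∫ k, ‖ψ n k‖ ^ 2 ∂μ ≤ 1)
    (hφx : L2MassConcentratesAt μ φ x) (hψy : L2MassConcentratesAt μ ψ y) (hxy : x ≠ y)
    (hfC : ∀ k, ‖f k‖ ≤ C) :
    Tendsto (fun n => ∫ k, φ n k * conj (ψ n k) * f k ∂μ) atTop (𝓝 0) := by
  have hlim := (tendsto_integral_norm_mul_norm_of_ne hφ hψ hφ1 hψ1 hφx hψy hxy).const_mul C
  rw [mul_zero] at hlim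
  refine squeeze_zero_norm (fun n => ?_) hlim
  rw [← integral_const_mul]
  refine (norm_integral_le_integral_norm _).trans (integral_mono_of_nonneg
    (ae_of_all _ fun _ => norm_nonneg _)
    ((integrable_norm_mul_norm (hφ n) (hψ n)).const_mul C) (ae_of_all _ fun k => ?_))
  dsimp only
  rw [norm_mul, norm_mul, Complex.norm_conj, mul_comm C]
  exact mul_le_mul_of_nonneg_left (hfC k) (by positivity)

end Metric

end

section Translation

variable {G : Type*} [NormedAddCommGroup G] [MeasurableSpace G] [MeasurableAdd G]
  [MeasurableNeg G] {μ : Measure G} [μ.IsAddLeftInvariant] [μ.IsNegInvariant]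

theorem MeasureTheory.MemLp.comp_const_sub {φ : G → E} {p : ENNReal} (hφ : MemLp φ p μ) (a : G) :
    MemLp (fun k => φ (a - k)) p μ :=
  hφ.comp_measurePreserving (Measure.measurePreserving_sub_left μ a)

theorem L2MassConcentratesAt.comp_const_sub {φ : ℕ → G → E} (hφ : L2MassConcentratesAt μ φ 0)
    (a : G) : L2MassConcentratesAt μ (fun n k => φ n (a - k)) a := by
  intro r hr
  have hball : (a - ·) ⁻¹' ball 0 r = ball a r := by
    ext k
    rw [Set.mem_preimage, mem_ball_zero_iff, mem_ball, dist_eq_norm, norm_sub_rev]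
  refine (hφ r hr).congr fun n => ?_
  rw [← (Measure.measurePreserving_sub_left μ a).setIntegral_preimage_emb
    (MeasurableEquiv.subLeft a).measurableEmbedding, Set.preimage_compl, hball]

end Translation

theorem tapered_periodogram_convergence_general
    (d : ℕ) (c : ℂ)
    (H G : ℕ → EuclideanSpace ℝ (Fin d) → ℂ)
    (hHmeas : ∀ n, Measurable (H n)) (hGmeas : ∀ n, Measurable (G n))
    (hH2 : ∀ n, ∫ k : EuclideanSpace ℝ (Fin d), ‖H n k‖ ^ 2 = 1)
    (hG2 : ∀ n, ∫ k : EuclideanSpace ℝ (Fin d), ‖G n k‖ ^ 2 = 1)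
    (hHG : ∀ n, ∫ k : EuclideanSpace ℝ (Fin d), H n k * (starRingEnd ℂ) (G n k) = c)
    (b : ℕ → ℝ)
    (hb0 : Tendsto b atTop (nhds 0))
    (hHconc : Tendsto (fun n =>
      ∫ k in Metric.ball (0 : EuclideanSpace ℝ (Fin d)) (b n), ‖H n k‖ ^ 2)
        atTop (nhds 1))
    (hGconc : Tendsto (fun n =>
      ∫ k in Metric.ball (0 : EuclideanSpace ℝ (Fin d)) (b n), ‖G n k‖ ^ 2)
        atTop (nhds 1))
    (f : EuclideanSpace ℝ (Fin d) → ℂ) (hf : Continuous f)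
    (hfb : ∃ Cf : ℝ, ∀ x, ‖f x‖ ≤ Cf) :
    ∀ k₁ k₂ : EuclideanSpace ℝ (Fin d),
      (k₁ = k₂ →
        Tendsto (fun n => ∫ k' : EuclideanSpace ℝ (Fin d),
            H n (k₁ - k') * (starRingEnd ℂ) (G n (k₂ - k')) * f k')
          atTop (nhds (c * f k₁))) ∧
      (k₁ ≠ k₂ →
        Tendsto (fun n => ∫ k' : EuclideanSpace ℝ (Fin d),
            H n (k₁ - k') * (starRingEnd ℂ) (G n (k₂ - k')) * f k')
          atTop (nhds 0)) := by
  obtain ⟨C, hfC⟩ := hfb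
  have memLp_two {φ : EuclideanSpace ℝ (Fin d) → ℂ} (hφ : Measurable φ)
      (h1 : ∫ k, ‖φ k‖ ^ 2 = 1) : MemLp φ 2 volume :=
    (memLp_two_iff_integrable_sq_norm hφ.aestronglyMeasurable).2
      (Integrable.of_integral_ne_zero (by rw [h1]; exact one_ne_zero))
  have hH (n) : MemLp (H n) 2 volume := memLp_two (hHmeas n) (hH2 n)
  have hG (n) : MemLp (G n) 2 volume := memLp_two (hGmeas n) (hG2 n)
  have hH1 (a n) : ∫ k, ‖H n (a - k)‖ ^ 2 ≤ 1 :=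
    ((integral_sub_left_eq_self (‖H n ·‖ ^ 2) volume a).trans (hH2 n)).le
  have hG1 (a n) : ∫ k, ‖G n (a - k)‖ ^ 2 ≤ 1 :=
    ((integral_sub_left_eq_self (‖G n ·‖ ^ 2) volume a).trans (hG2 n)).le
  have hHloc := L2MassConcentratesAt.of_tendsto_setIntegral_ball hH (fun n => (hH2 n).le) hb0 hHconc
  have hGloc := L2MassConcentratesAt.of_tendsto_setIntegral_ball hG (fun n => (hG2 n).le) hb0 hGconc
  intro k₁ k₂
  refine ⟨?_, fun hne => tendsto_integral_mul_conj_mul_of_ne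
    (fun n => (hH n).comp_const_sub k₁) (fun n => (hG n).comp_const_sub k₂) (hH1 k₁) (hG1 k₂)
    (hHloc.comp_const_sub k₁) (hGloc.comp_const_sub k₂) hne hfC⟩
  rintro rfl
  have hc (n) : ∫ k, H n (k₁ - k) * conj (G n (k₁ - k)) = c :=
    (integral_sub_left_eq_self (fun u => H n u * conj (G n u)) volume k₁).trans (hHG n)
  have hlim := tendsto_integral_mul_conj_mul_sub (fun n => (hH n).comp_const_sub k₁)
    (fun n => (hG n).comp_const_sub k₁) (hH1 k₁) (hG1 k₁) (hHloc.comp_const_sub k₁)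
    hf.continuousAt hf.aestronglyMeasurable hfC
  simp only [hc] at hlim
  exact tendsto_sub_nhds_zero_iff.mp hlim

/-- Asymptotic unbiasedness of the tapered cross-periodogram (continuous sampling case):
if the transfer functions `H_n`, `G_n` have unit `L²` norm, constant inner product `c`,
and concentrate on balls of shrinking bandwidth `b_n → 0`, then for bounded continuous `f`,
`∫ H_n(k₁-k') conj(G_n(k₂-k')) f(k') dk' → c f(k₁)` if `k₁ = k₂`, and `→ 0` otherwise. -/
theorem tapered_periodogram_convergence
    (d : ℕ) (hd : 1 ≤ d) (c : ℂ)
    (H G : ℕ → EuclideanSpace ℝ (Fin d) → ℂ)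
    (hHmeas : ∀ n, Measurable (H n)) (hGmeas : ∀ n, Measurable (G n))
    (hH2 : ∀ n, ∫ k : EuclideanSpace ℝ (Fin d), ‖H n k‖ ^ 2 = 1)
    (hG2 : ∀ n, ∫ k : EuclideanSpace ℝ (Fin d), ‖G n k‖ ^ 2 = 1)
    (hHG : ∀ n, ∫ k : EuclideanSpace ℝ (Fin d), H n k * (starRingEnd ℂ) (G n k) = c)
    (b : ℕ → ℝ) (hbpos : ∀ n, 0 < b n)
    (hb0 : Tendsto b atTop (nhds 0))
    (hHconc : Tendsto (fun n =>
      ∫ k in Metric.ball (0 : EuclideanSpace ℝ (Fin d)) (b n), ‖H n k‖ ^ 2)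
        atTop (nhds 1))
    (hGconc : Tendsto (fun n =>
      ∫ k in Metric.ball (0 : EuclideanSpace ℝ (Fin d)) (b n), ‖G n k‖ ^ 2)
        atTop (nhds 1))
    (f : EuclideanSpace ℝ (Fin d) → ℂ) (hf : Continuous f)
    (hfb : ∃ Cf : ℝ, ∀ x, ‖f x‖ ≤ Cf) :
    ∀ k₁ k₂ : EuclideanSpace ℝ (Fin d),
      (k₁ = k₂ →
        Tendsto (fun n => ∫ k' : EuclideanSpace ℝ (Fin d),
            H n (k₁ - k') * (starRingEnd ℂ) (G n (k₂ - k')) * f k')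
          atTop (nhds (c * f k₁))) ∧
      (k₁ ≠ k₂ →
        Tendsto (fun n => ∫ k' : EuclideanSpace ℝ (Fin d),
            H n (k₁ - k') * (starRingEnd ℂ) (G n (k₂ - k')) * f k')
          atTop (nhds 0)) :=
  tapered_periodogram_convergence_general d c H G hHmeas hGmeas hH2 hG2 hHG b hb0 hHconc hGconc f hf
    hfb
end
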